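/- (Cardinality bound for the dominating Bernoulli process) Let K be a Hermitian PSD matrix with maximal eigenvalue λ_max(K) < 1, defining a DPP Y, and let X be the Bernoulli process with q_k = K(k,k) + K_{{k}×{1:k−1}} ((I−K)_{{1:k−1}})^{-1} K_{{1:k−1}×{k}}. Then 𝔼(|X|) = Σ_k q_k ≤ (1 + λ_max(K) / (2(1 − λ_max(K)))) · Tr(K), and Tr(K) = 𝔼(|Y|). -/

import Mathlib

/-- The `k`-th Bernoulli probability `q_k = K(k,k) + K_{{k}×{1:k−1}}
((I−K)_{{1:k−1}})⁻¹ K_{{1:k−1}×{k}}` of the dominating Bernoulli process. -/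
noncomputable def bernoulliQ {N : ℕ} (K : Matrix (Fin N) (Fin N) ℝ) (k : Fin N) : ℝ :=
  K k k + ∑ i : {i : Fin N // i < k}, ∑ j : {j : Fin N // j < k},
    K k i.1 *
      ((((1 : Matrix (Fin N) (Fin N) ℝ) - K).submatrix
          (fun a : {i : Fin N // i < k} => a.1)
          (fun a : {j : Fin N // j < k} => a.1))⁻¹ i j) *
      K j.1 k

/-- The principal submatrix of `K` indexed by a finite subset `A`. -/
noncomputable def subMat {N : ℕ} (K : Matrix (Fin N) (Fin N) ℝ) (A : Finset (Fin N)) :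
    Matrix A A ℝ :=
  K.submatrix (fun i : A => (i : Fin N)) (fun j : A => (j : Fin N))

/-!
Write `M_k` for the principal block `(I - K)_{<k}`. Since `K ≤ λ I`, also `M_k ≥ (1 - λ) I`, so
`M_k⁻¹ ≤ (1 - λ)⁻¹ I` and `q_k ≤ K_kk + (1 - λ)⁻¹ ∑_{i<k} K_ki²`. Summed over `k`, the squares
below the diagonal make up at most half of `∑_{i,k} K_ki² = Tr(K²)`, and `Tr(K²) ≤ λ Tr(K)`
because the trace of the product of the positive semidefinite matrices `K` and `λ I - K` is
nonnegative.
The identity `𝔼|Y| = Tr K` is double counting: `𝔼|Y| = ∑_k ℙ(k ∈ Y) = ∑_k K_kk`.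
-/

open Matrix
open scoped ComplexOrder

namespace Matrix

variable {n : Type*} [Fintype n]

theorem IsHermitian.trace_mul_self_eq_sum_sq {A : Matrix n n ℝ} (hA : A.IsHermitian) :
    (A * A).trace = ∑ i, ∑ j, A i j ^ 2 := by
  simp only [trace, diag, mul_apply]
  refine Finset.sum_congr rfl fun i _ => Finset.sum_congr rfl fun j _ => ?_
  rw [sq, ← hA.apply j i, star_trivial]

variable [DecidableEq n] {𝕜 : Type*} [RCLike 𝕜]

open scoped MatrixOrder in
theorem IsHermitian.posSemidef_smul_one_sub {A : Matrix n n 𝕜} (hA : A.IsHermitian) {c : ℝ}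
    (hc : ∀ i, hA.eigenvalues i ≤ c) : (c • 1 - A).PosSemidef := by
  have hle : A ≤ algebraMap ℝ _ c := le_algebraMap_of_spectrum_le (by
    rw [hA.spectrum_real_eq_range_eigenvalues]
    rintro _ ⟨i, rfl⟩
    exact hc i) hA
  rwa [Algebra.algebraMap_eq_smul_one, le_iff] at hle

open scoped MatrixOrder in
theorem PosSemidef.trace_mul_nonneg {A B : Matrix n n 𝕜} (hA : A.PosSemidef)
    (hB : B.PosSemidef) : 0 ≤ (A * B).trace := by
  obtain ⟨C, rfl⟩ := CStarAlgebra.nonneg_iff_eq_star_mul_self.mp hA.nonneg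
  rw [Matrix.mul_assoc, trace_mul_comm, Matrix.mul_assoc, ← Matrix.mul_assoc,
    star_eq_conjTranspose]
  exact (hB.mul_mul_conjTranspose_same C).trace_nonneg

theorem PosSemidef.trace_mul_self_le {A : Matrix n n ℝ} (hA : A.PosSemidef) {c : ℝ}
    (hc : ∀ i, hA.1.eigenvalues i ≤ c) : (A * A).trace ≤ c * A.trace := by
  have h := hA.trace_mul_nonneg (hA.1.posSemidef_smul_one_sub hc)
  rw [Matrix.mul_sub, Matrix.mul_smul, Matrix.mul_one, trace_sub, trace_smul, smul_eq_mul] at h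
  linarith

theorem dotProduct_inv_mulVec_le {M : Matrix n n ℝ} {c : ℝ} (hc : 0 < c)
    (hM : (M - c • 1).PosSemidef) (v : n → ℝ) : v ⬝ᵥ (M⁻¹ *ᵥ v) ≤ c⁻¹ * (v ⬝ᵥ v) := by
  have hMpos : M.PosDef := by simpa using PosDef.posSemidef_add hM (PosDef.one.smul hc)
  set w := M⁻¹ *ᵥ v
  have hMw : M *ᵥ w = v := by
    rw [mulVec_mulVec, mul_nonsing_inv _ hMpos.det_pos.ne'.isUnit, one_mulVec]
  have hquad : c * (w ⬝ᵥ w) ≤ v ⬝ᵥ w := by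
    have := hM.dotProduct_mulVec_nonneg w
    simp only [sub_mulVec, smul_mulVec, one_mulVec, hMw, dotProduct_sub, dotProduct_smul,
      star_trivial, smul_eq_mul, dotProduct_comm w v] at this
    linarith
  -- expanding `0 ≤ |v - c w|²` and using `hquad` gives `c (v ⬝ w) ≤ |v|²`
  have hsq : 0 ≤ (v - c • w) ⬝ᵥ (v - c • w) := by
    simpa using dotProduct_self_star_nonneg (v - c • w)
  simp only [sub_dotProduct, dotProduct_sub, smul_dotProduct, dotProduct_smul, smul_eq_mul,
    dotProduct_comm w v] at hsq
  rw [le_inv_mul_iff₀ hc]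
  nlinarith

end Matrix

theorem two_mul_sum_sum_lt_le {ι : Type*} [Fintype ι] [LinearOrder ι] (f : ι → ι → ℝ)
    (hsymm : ∀ i j, f i j = f j i) (hnonneg : ∀ i j, 0 ≤ f i j) :
    2 * ∑ k, ∑ i : {i // i < k}, f k i ≤ ∑ k, ∑ i, f k i := by
  have hsub : ∀ k, ∑ i : {i // i < k}, f k i = ∑ i with i < k, f k i := fun k =>
    (Finset.sum_subtype _ (by simp) _).symm
  have hflip : ∑ k, ∑ i with i < k, f k i = ∑ k, ∑ i with k < i, f k i := by
    simp_rw [Finset.sum_filter]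
    rw [Finset.sum_comm]
    simp_rw [hsymm]
  have hsplit : ∀ k, ∑ i with i < k, f k i + ∑ i with k < i, f k i ≤ ∑ i, f k i := fun k => by
    rw [← Finset.sum_union (Finset.disjoint_filter.mpr fun _ _ h₁ h₂ => lt_asymm h₁ h₂)]
    exact Finset.sum_le_sum_of_subset_of_nonneg (Finset.subset_univ _) fun i _ _ => hnonneg k i
  calc 2 * ∑ k, ∑ i : {i // i < k}, f k i
      = ∑ k, (∑ i with i < k, f k i + ∑ i with k < i, f k i) := by
        rw [Finset.sum_add_distrib, ← hflip, two_mul, Finset.sum_congr rfl fun k _ => hsub k]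
    _ ≤ ∑ k, ∑ i, f k i := Finset.sum_le_sum fun k _ => hsplit k

theorem Finset.sum_card_mul_eq_sum_sum_mem {α : Type*} [Fintype α] [DecidableEq α]
    (f : Finset α → ℝ) : ∑ C, (C.card : ℝ) * f C = ∑ a, ∑ C with a ∈ C, f C := by
  simp_rw [Finset.sum_filter]
  rw [Finset.sum_comm]
  refine Finset.sum_congr rfl fun C _ => ?_
  rw [← Finset.sum_filter, Finset.filter_mem_eq_inter, Finset.univ_inter, Finset.sum_const,
    nsmul_eq_mul]

theorem det_subMat_singleton {N : ℕ} (K : Matrix (Fin N) (Fin N) ℝ) (k : Fin N) :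
    (subMat K {k}).det = K k k := by
  rw [det_unique]
  rfl

theorem bernoulliQ_le {N : ℕ} {K : Matrix (Fin N) (Fin N) ℝ} (hK : K.IsHermitian) {lam : ℝ}
    (hmax : ∀ i, hK.eigenvalues i ≤ lam) (hlt : lam < 1) (k : Fin N) :
    bernoulliQ K k ≤ K k k + (1 - lam)⁻¹ * ∑ i : {i : Fin N // i < k}, K k i ^ 2 := by
  set e : {i : Fin N // i < k} → Fin N := Subtype.val
  set M := ((1 : Matrix (Fin N) (Fin N) ℝ) - K).submatrix e e
  set v : {i : Fin N // i < k} → ℝ := fun i => K k i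
  have hM : (M - (1 - lam) • 1).PosSemidef := by
    have hsub : M - (1 - lam) • 1 = (lam • 1 - K).submatrix e e := by
      ext i j
      by_cases hij : i = j <;> simp [M, e, one_apply, hij, Subtype.val_inj]
    exact hsub ▸ (hK.posSemidef_smul_one_sub hmax).submatrix e
  have hform : ∑ i : {i : Fin N // i < k}, ∑ j : {j : Fin N // j < k}, K k i * M⁻¹ i j * K j k
      = v ⬝ᵥ (M⁻¹ *ᵥ v) := by
    simp only [dotProduct, mulVec, Finset.mul_sum, v, ← hK.apply k, star_trivial, mul_assoc]
  have hv : v ⬝ᵥ v = ∑ i : {i : Fin N // i < k}, K k i ^ 2 := by simp only [dotProduct, v, sq]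
  rw [bernoulliQ, hform, ← hv]
  gcongr
  exact dotProduct_inv_mulVec_le (by linarith) hM v

theorem bernoulli_cardinal_bound_general {N : ℕ} (K : Matrix (Fin N) (Fin N) ℝ)
    (hK : K.PosSemidef) (lam : ℝ)
    (hmax : ∀ i, hK.1.eigenvalues i ≤ lam)
    (hlt : lam < 1)
    (P : Finset (Fin N) → ℝ)
    (hP : ∀ A : Finset (Fin N),
      ∑ B ∈ Finset.univ.filter (fun B => A ⊆ B), P B = (subMat K A).det) :
    (∑ k : Fin N, bernoulliQ K k ≤ (1 + lam / (2 * (1 - lam))) * K.trace) ∧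
    (∑ C : Finset (Fin N), (C.card : ℝ) * P C = K.trace) := by
  refine ⟨?_, ?_⟩
  · set S := ∑ k : Fin N, ∑ i : {i : Fin N // i < k}, K k i ^ 2
    have hq : ∑ k, bernoulliQ K k ≤ K.trace + (1 - lam)⁻¹ * S := calc
      _ ≤ ∑ k, (K k k + (1 - lam)⁻¹ * ∑ i : {i : Fin N // i < k}, K k i ^ 2) :=
        Finset.sum_le_sum fun k _ => bernoulliQ_le hK.1 hmax hlt k
      _ = K.trace + (1 - lam)⁻¹ * S := by rw [Finset.sum_add_distrib, ← Finset.mul_sum]; rfl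
    have hS : 2 * S ≤ lam * K.trace := calc
      2 * S ≤ ∑ k, ∑ i, K k i ^ 2 :=
        two_mul_sum_sum_lt_le _ (fun i j => by rw [← hK.1.apply, star_trivial])
          (fun _ _ => sq_nonneg _)
      _ = (K * K).trace := hK.1.trace_mul_self_eq_sum_sq.symm
      _ ≤ lam * K.trace := hK.trace_mul_self_le hmax
    have hpos : 0 < 1 - lam := by linarith
    calc ∑ k, bernoulliQ K k ≤ K.trace + (1 - lam)⁻¹ * S := hq
      _ ≤ K.trace + (1 - lam)⁻¹ * (lam * K.trace / 2) := by gcongr; linarith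
      _ = (1 + lam / (2 * (1 - lam))) * K.trace := by field_simp
  · have hdiag : ∀ k, ∑ C with k ∈ C, P C = K k k := fun k => by
      simpa only [Finset.singleton_subset_iff, det_subMat_singleton] using hP {k}
    rw [Finset.sum_card_mul_eq_sum_sum_mem, Finset.sum_congr rfl fun k _ => hdiag k]
    rfl

/-- Cardinality bound for the dominating Bernoulli process: if `λ_max(K) < 1` then
`𝔼(|X|) = Σ_k q_k ≤ (1 + λ_max/(2(1−λ_max))) Tr(K)` and `Tr(K) = 𝔼(|Y|)`. -/
theorem bernoulli_cardinal_bound {N : ℕ} (K : Matrix (Fin N) (Fin N) ℝ)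
    (hK : K.PosSemidef) (lam : ℝ)
    (hmax : ∀ i, hK.1.eigenvalues i ≤ lam)
    (hatt : ∃ i, hK.1.eigenvalues i = lam)
    (hlt : lam < 1)
    (P : Finset (Fin N) → ℝ) (hPnn : ∀ C, 0 ≤ P C)
    (hP : ∀ A : Finset (Fin N),
      ∑ B ∈ Finset.univ.filter (fun B => A ⊆ B), P B = (subMat K A).det) :
    (∑ k : Fin N, bernoulliQ K k ≤ (1 + lam / (2 * (1 - lam))) * K.trace) ∧
    (∑ C : Finset (Fin N), (C.card : ℝ) * P C = K.trace) :=
  bernoulli_cardinal_bound_general K hK lam hmax hlt P hP
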